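/- Let L be a connection on Ω and g a metric on Ω, with torsion T, lowered curvature R, and non-metricity Q. Then the third Bianchi–Padova relation holds: for all indices i,j,k,l and all points of Ω, (1/2)(∇_i Q_{jkl} − ∇_j Q_{ikl}) = (1/2)(R_{ijkl} + R_{ijlk}) − T_{ij}^p Q_{pkl}. -/

import Mathlib

noncomputable section

/-- Points of ℝ³. -/
abbrev E3 := Fin 3 → ℝ

/-- Partial derivative of `f` along the `j`-th coordinate at `x`. -/
def pd (f : E3 → ℝ) (j : Fin 3) (x : E3) : ℝ :=
  fderiv ℝ f x (Pi.single j 1)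

/-- A connection coefficient field: `L x i j k = L^i_{jk}(x)`. -/
abbrev Conn := E3 → Fin 3 → Fin 3 → Fin 3 → ℝ

/-- Smoothness of a connection on `Ω`. -/
def ConnSmooth (L : Conn) (Ω : Set E3) : Prop :=
  ∀ i j k, ContDiffOn ℝ (⊤ : ℕ∞) (fun x => L x i j k) Ω

/-- Torsion of a connection: `torsion L x i j k = T_{jk}^i = (1/2)(L^i_{jk} - L^i_{kj})`. -/
def torsion (L : Conn) (x : E3) (i j k : Fin 3) : ℝ :=
  (L x i j k - L x i k j) / 2

/-- Curvature of a connection: `curv L x p j i q = R_{jiq}^p`. -/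
def curv (L : Conn) (x : E3) (p j i q : Fin 3) : ℝ :=
  pd (fun y => L y p i q) j x - pd (fun y => L y p j q) i x
    + ∑ h, (L x h i q * L x p j h - L x h j q * L x p i h)

/-- A metric field. -/
abbrev Metric := E3 → Matrix (Fin 3) (Fin 3) ℝ

/-- `g` is a metric on `Ω`: smooth entries, symmetric and positive definite on `Ω`. -/
def MetricOn (g : Metric) (Ω : Set E3) : Prop :=
  (∀ i j, ContDiffOn ℝ (⊤ : ℕ∞) (fun x => g x i j) Ω) ∧
  (∀ x ∈ Ω, (g x).IsSymm) ∧ (∀ x ∈ Ω, (g x).PosDef)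

/-- Non-metricity of `(L, g)`: `nm L g x k i j = Q_{kij}`. -/
def nm (L : Conn) (g : Metric) (x : E3) (k i j : Fin 3) : ℝ :=
  - pd (fun y => g y i j) k x + ∑ p, (L x p k j * g x i p + L x p k i * g x j p)

/-- Lowered curvature: `lcurv L g x i j k l = R_{ijkl} = g_{lp} R_{ijk}^p`. -/
def lcurv (L : Conn) (g : Metric) (x : E3) (i j k l : Fin 3) : ℝ :=
  ∑ p, g x l p * curv L x p i j k

/-- Covariant derivative of the non-metricity:
`covQ L g m j k l x = ∇_m Q_{jkl}`. -/
def covQ (L : Conn) (g : Metric) (m j k l : Fin 3) (x : E3) : ℝ :=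
  pd (fun y => nm L g y j k l) m x
    - ∑ p, (L x p m j * nm L g x p k l + L x p m k * nm L g x j p l
            + L x p m l * nm L g x j k p)

/-!
In coordinates `Q_{jkl} = -∇_j g_{kl}` once `g` is symmetric, so the left-hand side is the
antisymmetrised second covariant derivative of `g`, and the relation is the Ricci identity for `g`.
Concretely: expanding `∂_i Q_{jkl} - ∂_j Q_{ikl}`, the second derivatives of `g` cancel by
symmetry of second partials, and what remains is an identity between polynomials in `g`, `∂g`,
`L` and `∂L` at the point, valid because `g_{ab}` and `∂_m g_{ab}` are symmetric in `a, b`.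
-/

open Filter Topology

section PartialDerivative

variable {x : E3} {j : Fin 3}

theorem pd_congr {f h : E3 → ℝ} (hfh : f =ᶠ[𝓝 x] h) : pd f j x = pd h j x := by
  rw [pd, pd, hfh.fderiv_eq]

theorem pd_add {f h : E3 → ℝ} (hf : DifferentiableAt ℝ f x) (hh : DifferentiableAt ℝ h x) :
    pd (fun y => f y + h y) j x = pd f j x + pd h j x := by
  simp [pd, fderiv_fun_add hf hh]

theorem pd_neg {f : E3 → ℝ} : pd (fun y => -f y) j x = -pd f j x := by
  simp [pd, fderiv_fun_neg]

theorem pd_mul {f h : E3 → ℝ} (hf : DifferentiableAt ℝ f x) (hh : DifferentiableAt ℝ h x) :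
    pd (fun y => f y * h y) j x = f x * pd h j x + h x * pd f j x := by
  simp [pd, fderiv_fun_mul hf hh]

theorem pd_sum {F : Fin 3 → E3 → ℝ} (hF : ∀ p, DifferentiableAt ℝ (F p) x) :
    pd (fun y => ∑ p, F p y) j x = ∑ p, pd (F p) j x := by
  simp [pd, fderiv_fun_sum fun p _ => hF p]

theorem pd_pd_eq_fderiv_fderiv {f : E3 → ℝ} (hf : DifferentiableAt ℝ (fderiv ℝ f) x)
    (i j : Fin 3) :
    pd (fun y => pd f j y) i x = fderiv ℝ (fderiv ℝ f) x (Pi.single i 1) (Pi.single j 1) := by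
  simp [pd, fderiv_clm_apply hf (differentiableAt_const _)]

variable {Ω : Set E3}

theorem ContDiffOn.pd {f : E3 → ℝ} (hΩ : IsOpen Ω) (hf : ContDiffOn ℝ (⊤ : ℕ∞) f Ω)
    (j : Fin 3) : ContDiffOn ℝ (⊤ : ℕ∞) (fun y => pd f j y) Ω :=
  (hf.fderiv_of_isOpen hΩ (by decide)).clm_apply contDiffOn_const

theorem pd_comm {f : E3 → ℝ} (hΩ : IsOpen Ω) (hf : ContDiffOn ℝ (⊤ : ℕ∞) f Ω)
    (hx : x ∈ Ω) (i j : Fin 3) : pd (fun y => pd f j y) i x = pd (fun y => pd f i y) j x := by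
  have hf' : ContDiffAt ℝ (⊤ : ℕ∞) f x := hf.contDiffAt (hΩ.mem_nhds hx)
  have hsymm : IsSymmSndFDerivAt ℝ f x :=
    hf'.isSymmSndFDerivAt (by rw [minSmoothness_of_isRCLikeNormedField]; decide)
  have hdiff : DifferentiableAt ℝ (fderiv ℝ f) x :=
    (hf'.fderiv_right (m := ((⊤ : ℕ∞) : WithTop ℕ∞)) (by decide)).differentiableAt
      (by decide)
  rw [pd_pd_eq_fderiv_fderiv hdiff, pd_pd_eq_fderiv_fderiv hdiff, hsymm]

end PartialDerivative

theorem exists_eq_half_add_swap {α : Type*} {f : α → α → ℝ} (hf : ∀ a b, f a b = f b a) :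
    ∃ F : α → α → ℝ, ∀ a b, f a b = (F a b + F b a) / 2 :=
  ⟨f, fun a b => by rw [hf b a]; ring⟩

section NonMetricity

variable {Ω : Set E3} {x : E3} {L : Conn} {g : Metric}

theorem pd_nm (hΩ : IsOpen Ω) (hL : ConnSmooth L Ω)
    (hg : ∀ a b, ContDiffOn ℝ (⊤ : ℕ∞) (fun y => g y a b) Ω) (hx : x ∈ Ω)
    (m j k l : Fin 3) :
    pd (fun y => nm L g y j k l) m x =
      -pd (fun y => pd (fun z => g z k l) j y) m x
      + ∑ p, (pd (fun y => L y p j l) m x * g x k p + L x p j l * pd (fun y => g y k p) m x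
            + (pd (fun y => L y p j k) m x * g x l p + L x p j k * pd (fun y => g y l p) m x)) := by
  have diff {f : E3 → ℝ} (hf : ContDiffOn ℝ (⊤ : ℕ∞) f Ω) : DifferentiableAt ℝ f x :=
    (hf.contDiffAt (hΩ.mem_nhds hx)).differentiableAt (by simp)
  have dL : ∀ p a b, DifferentiableAt ℝ (fun y => L y p a b) x := fun p a b => diff (hL p a b)
  have dg : ∀ a b, DifferentiableAt ℝ (fun y => g y a b) x := fun a b => diff (hg a b)
  have dpg : DifferentiableAt ℝ (fun y => pd (fun z => g z k l) j y) x :=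
    diff ((hg k l).pd hΩ j)
  have dterm : ∀ p, DifferentiableAt ℝ (fun z => L z p j l * g z k p + L z p j k * g z l p) x :=
    fun p => ((dL p j l).mul (dg k p)).add ((dL p j k).mul (dg l p))
  have hsplit : pd (fun y => nm L g y j k l) m x
      = -pd (fun y => pd (fun z => g z k l) j y) m x
        + ∑ p, pd (fun y => L y p j l * g y k p + L y p j k * g y l p) m x := by
    rw [← pd_neg, ← pd_sum dterm]
    exact pd_add dpg.neg (.fun_sum fun p _ => dterm p)
  rw [hsplit]
  congr 1
  refine Finset.sum_congr rfl fun p _ => ?_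
  rw [pd_add ((dL p j l).fun_mul (dg k p)) ((dL p j k).fun_mul (dg l p)),
    pd_mul (dL p j l) (dg k p), pd_mul (dL p j k) (dg l p)]
  ring

theorem half_covQ_sub_covQ_of_isSymm (hΩ : IsOpen Ω) (hL : ConnSmooth L Ω)
    (hg : ∀ a b, ContDiffOn ℝ (⊤ : ℕ∞) (fun y => g y a b) Ω)
    (hgs : ∀ y ∈ Ω, (g y).IsSymm) (hx : x ∈ Ω) (i j k l : Fin 3) :
    (1 / 2) * (covQ L g i j k l x - covQ L g j i k l x)
      = (1 / 2) * (lcurv L g x i j k l + lcurv L g x i j l k)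
        - ∑ p, torsion L x p i j * nm L g x p k l := by
  have hpd_symm : ∀ m a b, pd (fun y => g y a b) m x = pd (fun y => g y b a) m x := by
    refine fun m a b => pd_congr ?_
    filter_upwards [hΩ.mem_nhds hx] with y hy using ((hgs y hy).apply a b).symm
  -- Writing `g x` and `∂_m g` at `x` as symmetrisations lets `ring` use their symmetry.
  obtain ⟨G, hG⟩ := exists_eq_half_add_swap fun a b => ((hgs x hx).apply a b).symm
  choose D hD using fun m => exists_eq_half_add_swap (hpd_symm m)
  rw [covQ, covQ, pd_nm hΩ hL hg hx i j k l, pd_nm hΩ hL hg hx j i k l,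
    pd_comm hΩ (hg k l) hx i j]
  simp only [nm, lcurv, curv, torsion, hD, hG, Fin.sum_univ_three]
  ring

end NonMetricity

theorem third_bianchi_padova_general (Ω : Set E3) (hΩ : IsOpen Ω)
    (L : Conn) (hL : ConnSmooth L Ω) (g : Metric) (hg : MetricOn g Ω) :
    ∀ x ∈ Ω, ∀ i j k l : Fin 3,
      (1 / 2) * (covQ L g i j k l x - covQ L g j i k l x)
        = (1 / 2) * (lcurv L g x i j k l + lcurv L g x i j l k)
          - ∑ p, torsion L x p i j * nm L g x p k l :=
  fun _ hx => half_covQ_sub_covQ_of_isSymm hΩ hL hg.1 hg.2.1 hx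

/-- The third Bianchi–Padova relation:
`∇_{[i} Q_{j]kl} = R_{ij(kl)} - T_{ij}^p Q_{pkl}`. -/
theorem third_bianchi_padova (Ω : Set E3) (hΩ : IsOpen Ω) (hne : Ω.Nonempty)
    (L : Conn) (hL : ConnSmooth L Ω) (g : Metric) (hg : MetricOn g Ω) :
    ∀ x ∈ Ω, ∀ i j k l : Fin 3,
      (1 / 2) * (covQ L g i j k l x - covQ L g j i k l x)
        = (1 / 2) * (lcurv L g x i j k l + lcurv L g x i j l k)
          - ∑ p, torsion L x p i j * nm L g x p k l :=
  third_bianchi_padova_general Ω hΩ L hL g hg
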